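/- Let X be an R^n-valued random vector with finite mean vector μ = E(X) and positive definite covariance matrix V = Cov(X). Then for every ε > 0, P((X − μ)ᵀ V⁻¹ (X − μ) ≥ ε) ≤ n/ε. -/

import Mathlib

open MeasureTheory Matrix

/-!
Markov's inequality applied to the squared Mahalanobis distance `Q = (X - μ)ᵀ V⁻¹ (X - μ)`.
By linearity of the integral, `E[Yᵀ A Y] = tr (A E[Y Yᵀ])` for every matrix `A`, so
`E[Q] = tr (V⁻¹ V) = n`, and therefore `P (Q ≥ ε) ≤ E[Q] / ε = n / ε`.
-/

section SecondMoment

variable {Ω ι : Type*} [MeasurableSpace Ω] {P : Measure Ω}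

theorem MeasureTheory.Integrable.sub_const_mul_sub_const [IsFiniteMeasure P] {f g : Ω → ℝ}
    (hf : Integrable f P) (hg : Integrable g P) (hfg : Integrable (fun ω => f ω * g ω) P)
    (a b : ℝ) : Integrable (fun ω => (f ω - a) * (g ω - b)) P := by
  have h : Integrable (fun ω => f ω * g ω - a * g ω - f ω * b + a * b) P :=
    ((hfg.sub (hg.const_mul a)).sub (hf.mul_const b)).add (integrable_const _)
  refine h.congr (Filter.Eventually.of_forall fun ω => ?_)
  ring

variable [Fintype ι]

noncomputable def secondMomentMatrix (P : Measure Ω) (Y : Ω → ι → ℝ) : Matrix ι ι ℝ :=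
  Matrix.of fun i j => ∫ ω, Y ω i * Y ω j ∂P

theorem dotProduct_mulVec_self_eq_sum (A : Matrix ι ι ℝ) (y : ι → ℝ) :
    y ⬝ᵥ (A *ᵥ y) = ∑ i, ∑ j, A i j * (y j * y i) := by
  simp only [dotProduct, mulVec, Finset.mul_sum]
  exact Finset.sum_congr rfl fun i _ => Finset.sum_congr rfl fun j _ => by ring

theorem integrable_dotProduct_mulVec_self {Y : Ω → ι → ℝ}
    (hY : ∀ i j, Integrable (fun ω => Y ω i * Y ω j) P) (A : Matrix ι ι ℝ) :
    Integrable (fun ω => Y ω ⬝ᵥ (A *ᵥ Y ω)) P := by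
  simp only [dotProduct_mulVec_self_eq_sum]
  exact integrable_finsetSum _ fun i _ => integrable_finsetSum _ fun j _ =>
    (hY j i).const_mul _

theorem integral_dotProduct_mulVec_self {Y : Ω → ι → ℝ}
    (hY : ∀ i j, Integrable (fun ω => Y ω i * Y ω j) P) (A : Matrix ι ι ℝ) :
    ∫ ω, Y ω ⬝ᵥ (A *ᵥ Y ω) ∂P = (A * secondMomentMatrix P Y).trace := by
  simp only [dotProduct_mulVec_self_eq_sum]
  refine (integral_finsetSum _ fun i _ => integrable_finsetSum _ fun j _ =>
    (hY j i).const_mul _).trans (Finset.sum_congr rfl fun i _ => ?_)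
  refine (integral_finsetSum _ fun j _ => (hY j i).const_mul _).trans
    (Finset.sum_congr rfl fun j _ => ?_)
  exact integral_const_mul _ _

end SecondMoment

theorem multivariate_chebyshev_general {Ω : Type*} [MeasurableSpace Ω] (P : Measure Ω)
    [IsProbabilityMeasure P] (n : ℕ) (X : Ω → Fin n → ℝ)
    (hX : ∀ i, Integrable (fun ω => X ω i) P)
    (hX2 : ∀ i j, Integrable (fun ω => X ω i * X ω j) P)
    (μ : Fin n → ℝ)
    (V : Matrix (Fin n) (Fin n) ℝ)
    (hV : ∀ i j, V i j = ∫ ω, (X ω i - μ i) * (X ω j - μ j) ∂P)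
    (hVpd : V.PosDef) :
    ∀ ε : ℝ, 0 < ε →
      (P {ω | ε ≤ (X ω - μ) ⬝ᵥ (V⁻¹ *ᵥ (X ω - μ))}).toReal ≤ n / ε := by
  intro ε hε
  have hY : ∀ i j, Integrable (fun ω => (X ω - μ) i * (X ω - μ) j) P := fun i j =>
    (hX i).sub_const_mul_sub_const (hX j) (hX2 i j) (μ i) (μ j)
  have hV_eq : V = secondMomentMatrix P (fun ω => X ω - μ) := Matrix.ext hV
  have h_mean : ∫ ω, (X ω - μ) ⬝ᵥ (V⁻¹ *ᵥ (X ω - μ)) ∂P = n := by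
    rw [integral_dotProduct_mulVec_self hY, ← hV_eq,
      nonsing_inv_mul V ((isUnit_iff_isUnit_det V).mp hVpd.isUnit), trace_one, Fintype.card_fin]
  have h_nonneg : 0 ≤ᵐ[P] fun ω => (X ω - μ) ⬝ᵥ (V⁻¹ *ᵥ (X ω - μ)) :=
    Filter.Eventually.of_forall fun ω => hVpd.inv.posSemidef.dotProduct_mulVec_nonneg _
  have h_markov := mul_meas_ge_le_integral_of_nonneg h_nonneg
    (integrable_dotProduct_mulVec_self hY V⁻¹) ε
  rw [h_mean] at h_markov
  rw [le_div_iff₀ hε, mul_comm]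
  exact h_markov

theorem multivariate_chebyshev {Ω : Type*} [MeasurableSpace Ω] (P : Measure Ω)
    [IsProbabilityMeasure P] (n : ℕ) (X : Ω → Fin n → ℝ)
    (hX : ∀ i, Integrable (fun ω => X ω i) P)
    (hX2 : ∀ i j, Integrable (fun ω => X ω i * X ω j) P)
    (μ : Fin n → ℝ) (hμ : ∀ i, μ i = ∫ ω, X ω i ∂P)
    (V : Matrix (Fin n) (Fin n) ℝ)
    (hV : ∀ i j, V i j = ∫ ω, (X ω i - μ i) * (X ω j - μ j) ∂P)
    (hVpd : V.PosDef) :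
    ∀ ε : ℝ, 0 < ε →
      (P {ω | ε ≤ (X ω - μ) ⬝ᵥ (V⁻¹ *ᵥ (X ω - μ))}).toReal ≤ n / ε :=
  multivariate_chebyshev_general P n X hX hX2 μ V hV hVpd
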